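/- Let S be a proper sampling on {1, …, n} whose pairwise marginals satisfy P_ij = c₂ p_i p_j for all i ≠ j, where c₂ ≥ 0 and c₂ p_i ≤ 1 for all i. Assume each f_i : ℝ^d → ℝ is convex and M_i-smooth. Then for all x, y ∈ ℝ^d, Σ_C p_C ‖∇f_{v(C)}(x) − ∇f_{v(C)}(y)‖² ≤ 2 ( c₂ L + max_{i∈[n]} (λmax(M_i)/(n p_i)) (1 − p_i c₂) ) (f(x) − f(y) − ⟨∇f(y), x − y⟩), where L = (1/n) λmax(Σ_{i=1}^n M_i). -/

import Mathlib

open RealInnerProductSpace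

/-- The largest eigenvalue of a (symmetric) real matrix, characterized as the supremum of the
Rayleigh quotient `⟨Ax, x⟩` over the unit sphere. -/
noncomputable def lamMax {d : ℕ} (A : Matrix (Fin d) (Fin d) ℝ) : ℝ :=
  sSup {r : ℝ | ∃ x : EuclideanSpace ℝ (Fin d), ‖x‖ = 1 ∧ r = ∑ j, ∑ k, A j k * x k * x j}

/-!
Write `a_i = (∇f_i(x) - ∇f_i(y)) / n`. Expanding the square,
`Σ_C p_C ‖Σ_{i∈C} a_i / p_i‖² = Σ_{i,j} P_ij ⟨a_i, a_j⟩ / (p_i p_j)`, and since `P_ij = c₂ p_i p_j`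
for `i ≠ j` while `P_ii = p_i`, this equals `c₂ ‖Σ_i a_i‖² + Σ_i (1/p_i - c₂) ‖a_i‖²`.
Now `Σ_i a_i = ∇f(x) - ∇f(y)`, and co-coercivity of the gradient of a convex `L`-smooth function,
`‖∇g(x) - ∇g(y)‖² ≤ 2 L D_g(x, y)` with `D_g` the Bregman divergence, bounds the first term
(for `f`, which is `L`-smooth) and each diagonal term (for `f_i`, which is `λmax(M_i)`-smooth).
Finally `D_f = (1/n) Σ_i D_{f_i}`.
-/

open Finset

section RayleighQuotient

variable {d : ℕ}

lemma bddAbove_rayleigh (A : Matrix (Fin d) (Fin d) ℝ) :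
    BddAbove {r : ℝ | ∃ x : EuclideanSpace ℝ (Fin d), ‖x‖ = 1 ∧
      r = ∑ j, ∑ k, A j k * x k * x j} := by
  refine ((isCompact_sphere (0 : EuclideanSpace ℝ (Fin d)) 1).bddAbove_image
    (f := fun x => ∑ j, ∑ k, A j k * x k * x j) (by fun_prop)).mono ?_
  rintro r ⟨x, hx, rfl⟩
  exact ⟨x, by simpa using hx, rfl⟩

lemma quadForm_le_lamMax (A : Matrix (Fin d) (Fin d) ℝ) (h : EuclideanSpace ℝ (Fin d)) :
    ∑ j, ∑ k, A j k * h k * h j ≤ lamMax A * ‖h‖ ^ 2 := by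
  rcases eq_or_ne h 0 with rfl | hh
  · simp
  set u := ‖h‖⁻¹ • h
  have hscale : ∑ j, ∑ k, A j k * h k * h j = ‖h‖ ^ 2 * ∑ j, ∑ k, A j k * u k * u j := by
    have : ‖h‖ ≠ 0 := norm_ne_zero_iff.2 hh
    simp only [u, PiLp.smul_apply, smul_eq_mul, mul_sum]
    refine sum_congr rfl fun j _ => sum_congr rfl fun k _ => ?_
    field_simp
  rw [hscale, mul_comm]
  exact mul_le_mul_of_nonneg_right
    (le_csSup (bddAbove_rayleigh A) ⟨u, norm_smul_inv_norm hh, rfl⟩) (sq_nonneg _)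

lemma Matrix.PosSemidef.lamMax_nonneg {A : Matrix (Fin d) (Fin d) ℝ} (hA : A.PosSemidef) :
    0 ≤ lamMax A := by
  refine Real.sSup_nonneg ?_
  rintro r ⟨x, -, rfl⟩
  simpa [dotProduct, Matrix.mulVec, mul_sum, mul_comm, mul_left_comm] using
    hA.dotProduct_mulVec_nonneg x

lemma quadForm_sum {ι : Type*} (s : Finset ι) (M : ι → Matrix (Fin d) (Fin d) ℝ)
    (h : EuclideanSpace ℝ (Fin d)) :
    ∑ j, ∑ k, (∑ i ∈ s, M i) j k * h k * h j = ∑ i ∈ s, ∑ j, ∑ k, M i j k * h k * h j := by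
  simp only [Matrix.sum_apply, sum_mul]
  rw [sum_congr rfl fun j _ => sum_comm]
  exact sum_comm

end RayleighQuotient

lemma convexOn_fun_sum {E ι : Type*} [AddCommGroup E] [Module ℝ E] {s : Set E}
    (hs : Convex ℝ s) (t : Finset ι) {f : ι → E → ℝ} (h : ∀ i ∈ t, ConvexOn ℝ s (f i)) :
    ConvexOn ℝ s (fun x => ∑ i ∈ t, f i x) := by
  classical
  induction t using Finset.induction_on with
  | empty => simpa using convexOn_const 0 hs
  | insert a t ha ih =>
    simp only [sum_insert ha]
    exact (h a (mem_insert_self a t)).add (ih fun i hi => h i (mem_insert_of_mem hi))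

section Bregman

variable {E : Type*} [NormedAddCommGroup E] [InnerProductSpace ℝ E] [CompleteSpace E]
  {f : E → ℝ}

noncomputable def bregmanDiv (f : E → ℝ) (x y : E) : ℝ := f x - f y - ⟪gradient f y, x - y⟫

lemma ConvexOn.add_inner_gradient_le (hc : ConvexOn ℝ Set.univ f) {y : E}
    (hd : DifferentiableAt ℝ f y) (z : E) : f y + ⟪gradient f y, z - y⟫ ≤ f z := by
  let ℓ : ℝ →ᵃ[ℝ] E := AffineMap.lineMap y z
  have hline : HasDerivAt (f ∘ ℓ) ⟪gradient f y, z - y⟫ 0 := by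
    rw [inner_gradient_left]
    exact (by simpa [ℓ] using hd.hasFDerivAt : HasFDerivAt f (fderiv ℝ f y) (ℓ 0)).comp_hasDerivAt
      0 AffineMap.hasDerivAt_lineMap
  have := (hc.comp_affineMap ℓ).le_slope_of_hasDerivAt
    (Set.mem_univ 0) (Set.mem_univ 1) zero_lt_one hline
  simp only [slope_def_field, Function.comp_apply, ℓ, AffineMap.lineMap_apply_zero,
    AffineMap.lineMap_apply_one, sub_zero, div_one] at this
  linarith

lemma ConvexOn.bregmanDiv_nonneg (hc : ConvexOn ℝ Set.univ f) {y : E}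
    (hd : DifferentiableAt ℝ f y) (x : E) : 0 ≤ bregmanDiv f x y := by
  have := hc.add_inner_gradient_le hd x
  rw [bregmanDiv]
  linarith

lemma ConvexOn.norm_sub_gradient_sq_le (hc : ConvexOn ℝ Set.univ f) (hd : Differentiable ℝ f)
    {L : ℝ} (hL : 0 ≤ L)
    (hs : ∀ u h, f (u + h) ≤ f u + ⟪gradient f u, h⟫ + L / 2 * ‖h‖ ^ 2) (x y : E) :
    ‖gradient f x - gradient f y‖ ^ 2 ≤ 2 * L * bregmanDiv f x y := by
  set s := gradient f x - gradient f y
  set D := bregmanDiv f x y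
  -- Convexity at `y` and smoothness at `x`, both evaluated at `x - t • s`, give a quadratic in `t`
  -- that is nonnegative everywhere; `discrim ≤ 0` is the claimed inequality multiplied by `‖s‖²`.
  have hquad : ∀ t : ℝ, 0 ≤ L / 2 * ‖s‖ ^ 2 * (t * t) + -‖s‖ ^ 2 * t + D := by
    intro t
    have hup := hs x (-t • s)
    have hlow := hc.add_inner_gradient_le (hd y) (x + -t • s)
    have e1 : ⟪gradient f y, x + -t • s - y⟫ =
        ⟪gradient f y, x - y⟫ - t * ⟪gradient f y, s⟫ := by
      rw [show x + -t • s - y = (x - y) + -t • s by abel, inner_add_right, inner_smul_right]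
      ring
    have e2 : ⟪gradient f x, -t • s⟫ = -t * ⟪gradient f x, s⟫ := inner_smul_right _ _ _
    have e3 : ‖-t • s‖ ^ 2 = t ^ 2 * ‖s‖ ^ 2 := by
      rw [norm_smul, mul_pow, Real.norm_eq_abs, sq_abs, neg_sq]
    have e4 : t * ⟪gradient f x, s⟫ - t * ⟪gradient f y, s⟫ = t * ‖s‖ ^ 2 := by
      rw [← mul_sub, ← inner_sub_left, real_inner_self_eq_norm_sq]
    rw [e1] at hlow
    rw [e2, e3] at hup
    have hD : D = f x - f y - ⟪gradient f y, x - y⟫ := rfl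
    linarith
  have hdisc := discrim_le_zero hquad
  rw [discrim] at hdisc
  rcases (sq_nonneg ‖s‖).eq_or_lt with hs0 | hs0
  · rw [← hs0]
    have := hc.bregmanDiv_nonneg (hd y) x
    positivity
  · nlinarith

lemma gradient_const_mul_sum {ι : Type*} (t : Finset ι) {f : ι → E → ℝ} {x : E}
    (hf : ∀ i ∈ t, DifferentiableAt ℝ (f i) x) (c : ℝ) :
    gradient (fun z => c * ∑ i ∈ t, f i z) x = c • ∑ i ∈ t, gradient (f i) x := by
  refine HasGradientAt.gradient ?_
  rw [hasGradientAt_iff_hasFDerivAt, map_smul, map_sum]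
  simp only [toDual_gradient]
  exact (HasFDerivAt.fun_sum fun i hi => (hf i hi).hasFDerivAt).const_mul c

lemma bregmanDiv_const_mul_sum {ι : Type*} (t : Finset ι) {f : ι → E → ℝ} {y : E}
    (hf : ∀ i ∈ t, DifferentiableAt ℝ (f i) y) (c : ℝ) (x : E) :
    bregmanDiv (fun z => c * ∑ i ∈ t, f i z) x y = c * ∑ i ∈ t, bregmanDiv (f i) x y := by
  simp only [bregmanDiv, gradient_const_mul_sum t hf, real_inner_smul_left, sum_inner,
    ← mul_sub, ← sum_sub_distrib]

end Bregman

section Smooth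

variable {d : ℕ} {f : EuclideanSpace ℝ (Fin d) → ℝ} {M : Matrix (Fin d) (Fin d) ℝ}

lemma ConvexOn.norm_sub_gradient_sq_le_lamMax (hc : ConvexOn ℝ Set.univ f)
    (hd : Differentiable ℝ f) (hM : M.PosSemidef)
    (hs : ∀ x h : EuclideanSpace ℝ (Fin d),
      f (x + h) ≤ f x + ⟪gradient f x, h⟫ + (1 / 2) * ∑ j, ∑ k, M j k * h k * h j)
    (x y : EuclideanSpace ℝ (Fin d)) :
    ‖gradient f x - gradient f y‖ ^ 2 ≤ 2 * lamMax M * bregmanDiv f x y :=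
  hc.norm_sub_gradient_sq_le hd hM.lamMax_nonneg
    (fun u h => by linarith [hs u h, quadForm_le_lamMax M h]) x y

lemma ConvexOn.inv_sub_mul_norm_smul_gradient_sub_sq_le (hc : ConvexOn ℝ Set.univ f)
    (hd : Differentiable ℝ f) (hM : M.PosSemidef)
    (hs : ∀ x h : EuclideanSpace ℝ (Fin d),
      f (x + h) ≤ f x + ⟪gradient f x, h⟫ + (1 / 2) * ∑ j, ∑ k, M j k * h k * h j)
    {q c : ℝ} (hq : 0 < q) (hcq : c * q ≤ 1) (N : ℝ) (x y : EuclideanSpace ℝ (Fin d)) :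
    (q⁻¹ - c) * ‖N⁻¹ • (gradient f x - gradient f y)‖ ^ 2
      ≤ 2 * (lamMax M / (N * q) * (1 - q * c)) * (1 / N * bregmanDiv f x y) := by
  have hcoef : 0 ≤ q⁻¹ - c := by
    rw [sub_nonneg, inv_eq_one_div, le_div_iff₀ hq]
    exact hcq
  calc (q⁻¹ - c) * ‖N⁻¹ • (gradient f x - gradient f y)‖ ^ 2
      = (q⁻¹ - c) * (N⁻¹ ^ 2 * ‖gradient f x - gradient f y‖ ^ 2) := by
        rw [norm_smul, mul_pow, Real.norm_eq_abs, sq_abs]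
    _ ≤ (q⁻¹ - c) * (N⁻¹ ^ 2 * (2 * lamMax M * bregmanDiv f x y)) := by
        gcongr
        exact hc.norm_sub_gradient_sq_le_lamMax hd hM hs x y
    _ = 2 * (lamMax M / (N * q) * (1 - q * c)) * (1 / N * bregmanDiv f x y) := by
        field_simp

lemma smooth_const_mul_sum {ι : Type*} [Fintype ι] {f : ι → EuclideanSpace ℝ (Fin d) → ℝ}
    (hdiff : ∀ i, Differentiable ℝ (f i)) (M : ι → Matrix (Fin d) (Fin d) ℝ)
    (hsmooth : ∀ i (x h : EuclideanSpace ℝ (Fin d)),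
      f i (x + h) ≤ f i x + ⟪gradient (f i) x, h⟫ + (1 / 2) * ∑ j, ∑ k, M i j k * h k * h j)
    {c : ℝ} (hc : 0 ≤ c) (x h : EuclideanSpace ℝ (Fin d)) :
    c * ∑ i, f i (x + h) ≤ c * ∑ i, f i x + ⟪gradient (fun z => c * ∑ i, f i z) x, h⟫
      + c * lamMax (∑ i, M i) / 2 * ‖h‖ ^ 2 := by
  rw [gradient_const_mul_sum _ (fun i _ => (hdiff i).differentiableAt), real_inner_smul_left,
    sum_inner]
  have hsum := sum_le_sum fun i (_ : i ∈ univ) => hsmooth i x h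
  rw [sum_add_distrib, sum_add_distrib, ← mul_sum, ← quadForm_sum] at hsum
  have h1 := mul_le_mul_of_nonneg_left hsum hc
  have h2 := mul_le_mul_of_nonneg_left (quadForm_le_lamMax (∑ i, M i) h) hc
  linarith

lemma norm_sub_gradient_const_mul_sum_sq_le {ι : Type*} [Fintype ι]
    {f : ι → EuclideanSpace ℝ (Fin d) → ℝ} (hdiff : ∀ i, Differentiable ℝ (f i))
    (hconv : ∀ i, ConvexOn ℝ Set.univ (f i)) (M : ι → Matrix (Fin d) (Fin d) ℝ)
    (hM : ∀ i, (M i).PosSemidef)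
    (hsmooth : ∀ i (x h : EuclideanSpace ℝ (Fin d)),
      f i (x + h) ≤ f i x + ⟪gradient (f i) x, h⟫ + (1 / 2) * ∑ j, ∑ k, M i j k * h k * h j)
    {c : ℝ} (hc : 0 ≤ c) (x y : EuclideanSpace ℝ (Fin d)) :
    ‖gradient (fun z => c * ∑ i, f i z) x - gradient (fun z => c * ∑ i, f i z) y‖ ^ 2
      ≤ 2 * (c * lamMax (∑ i, M i)) * bregmanDiv (fun z => c * ∑ i, f i z) x y :=
  ((convexOn_fun_sum convex_univ univ fun i _ => hconv i).smul hc).norm_sub_gradient_sq_le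
    ((Differentiable.fun_sum fun i _ => hdiff i).const_mul _)
    (mul_nonneg hc (Matrix.posSemidef_sum univ fun i _ => hM i).lamMax_nonneg)
    (smooth_const_mul_sum hdiff M hsmooth hc) x y

end Smooth

section Sampling

variable {ι E : Type*} [Fintype ι] [DecidableEq ι] [NormedAddCommGroup E] [InnerProductSpace ℝ E]

lemma sum_mul_norm_sum_sq (p : Finset ι → ℝ) (a : ι → E) :
    ∑ C, p C * ‖∑ i ∈ C, a i‖ ^ 2 =
      ∑ i, ∑ j, (∑ C ∈ univ.filter (fun C => i ∈ C ∧ j ∈ C), p C) * ⟪a i, a j⟫ := by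
  calc _ = ∑ C, ∑ i, ∑ j, if i ∈ C ∧ j ∈ C then p C * ⟪a i, a j⟫ else 0 := by
        refine sum_congr rfl fun C _ => ?_
        simp only [ite_and, sum_ite_irrel, sum_const_zero, ← sum_filter, filter_mem_eq_inter,
          univ_inter, ← real_inner_self_eq_norm_sq, sum_inner, inner_sum, mul_sum]
        exact sum_comm
    _ = _ := by
        rw [sum_comm]
        refine sum_congr rfl fun i _ => ?_
        rw [sum_comm]
        simp only [sum_filter, sum_mul, ite_mul, zero_mul]

lemma sum_mul_norm_sum_inv_smul_sq_of_pairwise (p : Finset ι → ℝ) {q : ι → ℝ}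
    (hq : ∀ i, q i = ∑ C ∈ univ.filter (fun C => i ∈ C), p C) (hq0 : ∀ i, q i ≠ 0) (c : ℝ)
    (hpair : ∀ i j, i ≠ j → ∑ C ∈ univ.filter (fun C => i ∈ C ∧ j ∈ C), p C = c * q i * q j)
    (a : ι → E) :
    ∑ C, p C * ‖∑ i ∈ C, (q i)⁻¹ • a i‖ ^ 2 =
      c * ‖∑ i, a i‖ ^ 2 + ∑ i, ((q i)⁻¹ - c) * ‖a i‖ ^ 2 := by
  have hcoef : ∀ i j, (∑ C ∈ univ.filter (fun C => i ∈ C ∧ j ∈ C), p C) * ((q i)⁻¹ * (q j)⁻¹)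
      = c + if i = j then (q i)⁻¹ - c else 0 := by
    intro i j
    rcases eq_or_ne i j with rfl | hij
    · rw [if_pos rfl]
      simp only [and_self, ← hq]
      field_simp [hq0 i]
      ring
    · rw [hpair i j hij, if_neg hij, add_zero]
      field_simp [hq0 i, hq0 j]
  calc _ = ∑ i, ∑ j, (c + if i = j then (q i)⁻¹ - c else 0) * ⟪a i, a j⟫ := by
        simp_rw [sum_mul_norm_sum_sq, real_inner_smul_left, real_inner_smul_right, ← hcoef]
        ring_nf
    _ = _ := by
        simp only [add_mul, sum_add_distrib, ite_mul, zero_mul, sum_ite_eq, mem_univ, if_true,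
          ← mul_sum, ← inner_sum, ← sum_inner, real_inner_self_eq_norm_sq]

end Sampling

theorem expected_smoothness_pairwise_product_marginals_general
    {d n : ℕ}
    (p : Finset (Fin n) → ℝ)
    (q : Fin n → ℝ)
    (hq : ∀ i, q i = ∑ C ∈ Finset.univ.filter (fun C : Finset (Fin n) => i ∈ C), p C)
    (hproper : ∀ i, 0 < q i)
    (Pm : Fin n → Fin n → ℝ)
    (hPm : ∀ i j, Pm i j = ∑ C ∈ Finset.univ.filter (fun C : Finset (Fin n) => i ∈ C ∧ j ∈ C), p C)
    (c₂ : ℝ) (hc₂0 : 0 ≤ c₂)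
    (hc₂q : ∀ i, c₂ * q i ≤ 1)
    (hpair : ∀ i j, i ≠ j → Pm i j = c₂ * q i * q j)
    (f : Fin n → EuclideanSpace ℝ (Fin d) → ℝ)
    (hdiff : ∀ i, Differentiable ℝ (f i))
    (hconv : ∀ i, ConvexOn ℝ Set.univ (f i))
    (M : Fin n → Matrix (Fin d) (Fin d) ℝ)
    (hMpd : ∀ i, (M i).PosDef)
    (hsmooth : ∀ i (x h : EuclideanSpace ℝ (Fin d)),
      f i (x + h) ≤ f i x + ⟪gradient (f i) x, h⟫ + (1 / 2) * ∑ j, ∑ k, M i j k * h k * h j)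
    (F : EuclideanSpace ℝ (Fin d) → ℝ)
    (hF : ∀ x, F x = (1 / (n : ℝ)) * ∑ i, f i x)
    (gC : Finset (Fin n) → EuclideanSpace ℝ (Fin d) → EuclideanSpace ℝ (Fin d))
    (hgC : ∀ C x, gC C x = ((n : ℝ)⁻¹) • ∑ i ∈ C, (q i)⁻¹ • gradient (f i) x)
    (L : ℝ) (hL : L = (1 / (n : ℝ)) * lamMax (∑ i, M i)) :
    ∀ x y, ∑ C : Finset (Fin n), p C * ‖gC C x - gC C y‖ ^ 2
        ≤ 2 * (c₂ * L + ⨆ i : Fin n, lamMax (M i) / ((n : ℝ) * q i) * (1 - q i * c₂))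
            * (F x - F y - ⟪gradient F y, x - y⟫) := by
  intro x y
  have hFeq : F = fun z => (1 / (n : ℝ)) * ∑ i, f i z := funext hF
  set K := ⨆ i : Fin n, lamMax (M i) / ((n : ℝ) * q i) * (1 - q i * c₂)
  set b : Fin n → EuclideanSpace ℝ (Fin d) :=
    fun i => (n : ℝ)⁻¹ • (gradient (f i) x - gradient (f i) y)
  have hsplit : ∑ C, p C * ‖gC C x - gC C y‖ ^ 2
      = c₂ * ‖∑ i, b i‖ ^ 2 + ∑ i, ((q i)⁻¹ - c₂) * ‖b i‖ ^ 2 := by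
    have hgC_sub : ∀ C, gC C x - gC C y = ∑ i ∈ C, (q i)⁻¹ • b i := fun C => by
      simp only [hgC, b, ← smul_sub, ← sum_sub_distrib, smul_sum, smul_comm (q _)⁻¹]
    simp_rw [hgC_sub]
    exact sum_mul_norm_sum_inv_smul_sq_of_pairwise p hq (fun i => (hproper i).ne') c₂
      (fun i j hij => (hPm i j).symm.trans (hpair i j hij)) b
  have hmean : ‖∑ i, b i‖ ^ 2 ≤ 2 * L * bregmanDiv F x y := by
    have hgrad : ∀ z, gradient F z = (1 / (n : ℝ)) • ∑ i, gradient (f i) z := fun z =>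
      hFeq ▸ gradient_const_mul_sum univ (fun i _ => (hdiff i).differentiableAt) _
    rw [show ∑ i, b i = gradient F x - gradient F y by
      rw [hgrad, hgrad, ← smul_sub, ← sum_sub_distrib, smul_sum, one_div], hFeq, hL]
    exact norm_sub_gradient_const_mul_sum_sq_le hdiff hconv M (fun i => (hMpd i).posSemidef)
      hsmooth (by positivity) x y
  have hterm : ∀ i, ((q i)⁻¹ - c₂) * ‖b i‖ ^ 2 ≤ 2 * K * (1 / (n : ℝ) * bregmanDiv (f i) x y) :=
    fun i => ((hconv i).inv_sub_mul_norm_smul_gradient_sub_sq_le (hdiff i) (hMpd i).posSemidef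
      (hsmooth i) (hproper i) (hc₂q i) n x y).trans <| by
        have := (hconv i).bregmanDiv_nonneg ((hdiff i) y) x
        gcongr
        exact le_ciSup (f := fun i => lamMax (M i) / ((n : ℝ) * q i) * (1 - q i * c₂))
          (Set.finite_range _).bddAbove i
  change _ ≤ _ * bregmanDiv F x y
  calc _ ≤ c₂ * (2 * L * bregmanDiv F x y)
        + ∑ i, 2 * K * (1 / (n : ℝ) * bregmanDiv (f i) x y) := by
        rw [hsplit]
        exact add_le_add (mul_le_mul_of_nonneg_left hmean hc₂0) (sum_le_sum fun i _ => hterm i)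
    _ = _ := by
        rw [← mul_sum, ← mul_sum, hFeq,
          bregmanDiv_const_mul_sum _ (fun i _ => (hdiff i).differentiableAt)]
        ring

/-- **Key estimate in the proof of Proposition 2.** Let `S` be a proper sampling whose pairwise
marginals satisfy `P_ij = c₂ p_i p_j` for `i ≠ j`, with `c₂ ≥ 0` and `c₂ p_i ≤ 1`. If each `f_i`
is convex and `M_i`-smooth, then for all `x, y`,
`Σ_C p_C ‖∇f_{v(C)}(x) − ∇f_{v(C)}(y)‖²
  ≤ 2 (c₂ L + max_i (λmax(M_i)/(n p_i))(1 − p_i c₂)) (f(x) − f(y) − ⟨∇f(y), x − y⟩)`,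
where `L = (1/n) λmax(Σ_i M_i)`. -/
theorem expected_smoothness_pairwise_product_marginals
    {d n : ℕ} (hn : 0 < n)
    (p : Finset (Fin n) → ℝ)
    (hp0 : ∀ C, 0 ≤ p C)
    (hpsum : ∑ C : Finset (Fin n), p C = 1)
    (q : Fin n → ℝ)
    (hq : ∀ i, q i = ∑ C ∈ Finset.univ.filter (fun C : Finset (Fin n) => i ∈ C), p C)
    (hproper : ∀ i, 0 < q i)
    (Pm : Fin n → Fin n → ℝ)
    (hPm : ∀ i j, Pm i j = ∑ C ∈ Finset.univ.filter (fun C : Finset (Fin n) => i ∈ C ∧ j ∈ C), p C)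
    (c₂ : ℝ) (hc₂0 : 0 ≤ c₂)
    (hc₂q : ∀ i, c₂ * q i ≤ 1)
    (hpair : ∀ i j, i ≠ j → Pm i j = c₂ * q i * q j)
    (f : Fin n → EuclideanSpace ℝ (Fin d) → ℝ)
    (hdiff : ∀ i, Differentiable ℝ (f i))
    (hconv : ∀ i, ConvexOn ℝ Set.univ (f i))
    (M : Fin n → Matrix (Fin d) (Fin d) ℝ)
    (hMpd : ∀ i, (M i).PosDef)
    (hsmooth : ∀ i (x h : EuclideanSpace ℝ (Fin d)),
      f i (x + h) ≤ f i x + ⟪gradient (f i) x, h⟫ + (1 / 2) * ∑ j, ∑ k, M i j k * h k * h j)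
    (F : EuclideanSpace ℝ (Fin d) → ℝ)
    (hF : ∀ x, F x = (1 / (n : ℝ)) * ∑ i, f i x)
    (gC : Finset (Fin n) → EuclideanSpace ℝ (Fin d) → EuclideanSpace ℝ (Fin d))
    (hgC : ∀ C x, gC C x = ((n : ℝ)⁻¹) • ∑ i ∈ C, (q i)⁻¹ • gradient (f i) x)
    (L : ℝ) (hL : L = (1 / (n : ℝ)) * lamMax (∑ i, M i)) :
    ∀ x y, ∑ C : Finset (Fin n), p C * ‖gC C x - gC C y‖ ^ 2
        ≤ 2 * (c₂ * L + ⨆ i : Fin n, lamMax (M i) / ((n : ℝ) * q i) * (1 - q i * c₂))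
            * (F x - F y - ⟪gradient F y, x - y⟫) :=
  expected_smoothness_pairwise_product_marginals_general p q hq hproper Pm hPm c₂ hc₂0 hc₂q hpair f
    hdiff hconv M hMpd hsmooth F hF gC hgC L hL
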